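/- Let a be a positive real number, let b be a complex number with Im b ≠ 0 (so that sin(arg b) ≠ 0), and let α, β be complex numbers. Then |(α/a − β/b)/(1 − (conj b)/b)| ≤ max(|α|/a, |β|/|b|) / |sin(arg b)|. -/

import Mathlib

/-!
Since `1 - b̄ / b = 2 i Im b / b` has modulus `2 |sin (arg b)|`, the claim reduces to the
triangle inequality `‖x - y‖ ≤ 2 max ‖x‖ ‖y‖` for `x = α / a` and `y = β / b`.
-/

open ComplexConjugate

namespace Complex

lemma norm_one_sub_conj_div_self {b : ℂ} (hb : b ≠ 0) :
    ‖1 - conj b / b‖ = 2 * |b.im| / ‖b‖ := by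
  have hsub : 1 - conj b / b = (b - conj b) / b := by field_simp
  rw [hsub, norm_div, sub_conj, norm_mul, norm_real, norm_I, Real.norm_eq_abs, abs_mul,
    abs_two, mul_one]

lemma abs_sin_arg (b : ℂ) : |Real.sin (arg b)| = |b.im| / ‖b‖ := by
  rw [sin_arg, abs_div, abs_norm]

end Complex

lemma norm_sub_le_two_mul_max {E : Type*} [SeminormedAddGroup E] (x y : E) :
    ‖x - y‖ ≤ 2 * max ‖x‖ ‖y‖ :=
  calc ‖x - y‖ ≤ ‖x‖ + ‖y‖ := norm_sub_le x y
    _ ≤ max ‖x‖ ‖y‖ + max ‖x‖ ‖y‖ := add_le_add (le_max_left _ _) (le_max_right _ _)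
    _ = 2 * max ‖x‖ ‖y‖ := (two_mul _).symm

/-- Bound for the modulus of the infinitesimal Beltrami coefficient in terms of
the edge ratios and the angle at the vertex `0`. -/
theorem beltrami_bound_sin (a : ℝ) (ha : 0 < a) (b : ℂ) (hb : b.im ≠ 0)
    (α β : ℂ) :
    ‖(α / a - β / b) / (1 - (starRingEnd ℂ) b / b)‖ ≤
      max (‖α‖ / a) (‖β‖ / ‖b‖) /
        |Real.sin (Complex.arg b)| := by
  have hb0 : b ≠ 0 := fun h => hb (by simp [h])
  have hnorm_α : ‖α / (a : ℂ)‖ = ‖α‖ / a := by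
    rw [norm_div, Complex.norm_real, Real.norm_eq_abs, abs_of_pos ha]
  have hnum := norm_sub_le_two_mul_max (α / a) (β / b)
  rw [hnorm_α, norm_div] at hnum
  have hden_pos : 0 < 2 * |b.im| / ‖b‖ := by positivity
  rw [norm_div, Complex.norm_one_sub_conj_div_self hb0, Complex.abs_sin_arg,
    ← mul_div_mul_left _ (|b.im| / ‖b‖) two_ne_zero, ← mul_div_assoc]
  exact div_le_div_of_nonneg_right hnum hden_pos.le
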